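/- arXiv:1606.03967 — 4 statements merged into one kernel-verified Lean document; each statement's English description precedes it below -/
import Mathlib

section
/- For every Hilbert space H with dim(H) > 2 (in particular ℂⁿ with n ≥ 3), there is no function w from the unit vectors of H to {0,1} such that for every orthonormal basis {x₁,…,xₙ}, the values w(xᵢ) sum to 1. -/
/-!
Take an orthonormal basis whose vector of value `1` is among the first three. Every orthonormal
triple in the span of these three completes the remaining basis vectors, all of value `0`, to an
orthonormal basis, so normalising real linear combinations of the three vectors turns `w` into a
`{0,1}`-valued function on the nonzero vectors of `ℝ³` that sums to `1` on every orthogonal triad.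
No such function exists (Kochen–Specker): if it takes the value `1` at `p`, an explicit
configuration of triads forces the value `1` at every `q` at an angle `θ` from `p` with
`8 sin² θ ≤ cos² θ`; six rotations by `π / 12` then carry `p` to a vector orthogonal to `p`,
which must have value `0`.
-/

open Matrix Real
open scoped InnerProductSpace

namespace KochenSpecker

lemma exists_forall_ne_eq_zero_of_sum_eq_one {ι : Type*} [Fintype ι] {g : ι → ℝ}
    (h01 : ∀ i, g i = 0 ∨ g i = 1) (hsum : ∑ i, g i = 1) : ∃ j, ∀ i ≠ j, g i = 0 := by
  classical
  have hnonneg : ∀ i, 0 ≤ g i := fun i ↦ by rcases h01 i with h | h <;> simp [h]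
  obtain ⟨j, hj⟩ : ∃ j, g j ≠ 0 := by
    by_contra! h
    simp [h] at hsum
  refine ⟨j, fun i hij ↦ ?_⟩
  have hle : ∑ k ∈ {i, j}, g k ≤ ∑ k, g k :=
    Finset.sum_le_sum_of_subset_of_nonneg (Finset.subset_univ _) fun k _ _ ↦ hnonneg k
  rw [Finset.sum_pair hij, hsum, (h01 j).resolve_left hj] at hle
  exact (h01 i).resolve_right (by intro h; linarith)

section InnerProductSpace

variable {𝕜 E : Type*} [RCLike 𝕜] [NormedAddCommGroup E] [InnerProductSpace 𝕜 E]

lemma orthonormal_append {a b : ℕ} {u : Fin a → E} {v : Fin b → E} (hu : Orthonormal 𝕜 u)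
    (hv : Orthonormal 𝕜 v) (huv : ∀ i j, ⟪u i, v j⟫_𝕜 = 0) : Orthonormal 𝕜 (Fin.append u v) := by
  classical
  rw [orthonormal_iff_ite] at hu hv ⊢
  intro i j
  induction i using Fin.addCases <;> induction j using Fin.addCases <;>
    simp [hu, hv, huv, inner_eq_zero_symm.mp (huv _ _), Fin.ext_iff] <;> omega

lemma orthonormal_inv_norm_smul {ι : Type*} {y : ι → E} (hy : ∀ i, y i ≠ 0)
    (hperp : Pairwise fun i j ↦ ⟪y i, y j⟫_𝕜 = 0) :
    Orthonormal 𝕜 fun i ↦ (‖y i‖⁻¹ : 𝕜) • y i :=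
  ⟨fun i ↦ norm_smul_inv_norm (hy i), fun i j hij ↦ by
    simp [inner_smul_left, inner_smul_right, hperp hij]⟩

lemma inner_sum_ofReal_smul {ι : Type*} [Fintype ι] {e : ι → E} (he : Orthonormal 𝕜 e)
    (u v : ι → ℝ) : ⟪∑ i, (u i : 𝕜) • e i, ∑ i, (v i : 𝕜) • e i⟫_𝕜 = ((u ⬝ᵥ v : ℝ) : 𝕜) := by
  simp [he.inner_sum, dotProduct]

end InnerProductSpace

lemma exists_sq_add_sq_eq_one_and_sq_eq {c s : ℝ} (hsc : 8 * s ^ 2 ≤ c ^ 2) :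
    ∃ a b : ℝ, b ≠ 0 ∧ b ^ 2 + a ^ 2 = 1 ∧ s ^ 2 = a ^ 2 * c ^ 2 * (b ^ 2 - a ^ 2) := by
  rcases eq_or_ne c 0 with rfl | hc
  · exact ⟨0, 1, one_ne_zero, by norm_num, by nlinarith⟩
  obtain ⟨k, hk⟩ : ∃ k, s ^ 2 = k * c ^ 2 := ⟨s ^ 2 / c ^ 2, by field_simp⟩
  have hk0 : 0 ≤ k := nonneg_of_mul_nonneg_left (hk ▸ sq_nonneg s) (by positivity)
  have hk8 : 8 * k ≤ 1 := le_of_mul_le_mul_right (by nlinarith) (by positivity : 0 < c ^ 2)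
  -- `a ^ 2 = (1 - r) / 4` is the smaller root of `T * (1 - 2 * T) = k`.
  set r := √(1 - 8 * k)
  have hr : r ^ 2 = 1 - 8 * k := sq_sqrt (by linarith)
  have hr0 : 0 ≤ r := sqrt_nonneg _
  have hr1 : r ≤ 1 := sqrt_le_one.mpr (by linarith)
  refine ⟨√((1 - r) / 4), √(1 - (1 - r) / 4), (sqrt_pos.mpr (by linarith)).ne', ?_, ?_⟩
  · rw [sq_sqrt (by linarith), sq_sqrt (by linarith)]; ring
  · rw [sq_sqrt (by linarith), sq_sqrt (by linarith), hk]
    linear_combination (c ^ 2 / 8) * hr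

noncomputable def rotXY (θ : ℝ) (v : Fin 3 → ℝ) : Fin 3 → ℝ :=
  ![cos θ * v 0 - sin θ * v 1, sin θ * v 0 + cos θ * v 1, v 2]

lemma rotXY_dotProduct_rotXY (θ : ℝ) (u v : Fin 3 → ℝ) : rotXY θ u ⬝ᵥ rotXY θ v = u ⬝ᵥ v := by
  rw [rotXY, rotXY, vec3_dotProduct', vec3_dotProduct]
  linear_combination (u 0 * v 0 + u 1 * v 1) * sin_sq_add_cos_sq θ

lemma eight_mul_sin_sq_le_cos_sq : 8 * sin (π / 12) ^ 2 ≤ cos (π / 12) ^ 2 := by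
  have h0 : 0 ≤ sin (π / 12) := sin_nonneg_of_nonneg_of_le_pi (by positivity) (by linarith [pi_pos])
  have h1 : sin (π / 12) ≤ 1 / 3 := (sin_le (by positivity)).trans (by linarith [pi_lt_four])
  nlinarith [sin_sq_add_cos_sq (π / 12)]

structure IsTriadColoring (f : (Fin 3 → ℝ) → ℝ) : Prop where
  eq_zero_or_eq_one : ∀ {u}, u ≠ 0 → f u = 0 ∨ f u = 1
  add_add_eq_one : ∀ {u v x}, u ≠ 0 → v ≠ 0 → x ≠ 0 →
    u ⬝ᵥ v = 0 → u ⬝ᵥ x = 0 → v ⬝ᵥ x = 0 → f u + f v + f x = 1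

namespace IsTriadColoring

variable {f : (Fin 3 → ℝ) → ℝ} (hf : IsTriadColoring f)
include hf

lemma comp {A : (Fin 3 → ℝ) → Fin 3 → ℝ} (hA : ∀ u v, A u ⬝ᵥ A v = u ⬝ᵥ v) :
    IsTriadColoring (f ∘ A) := by
  have hA0 : ∀ {u}, u ≠ 0 → A u ≠ 0 := fun hu h0 ↦
    hu (dotProduct_self_eq_zero.mp (by rw [← hA, h0, dotProduct_zero]))
  exact ⟨fun hu ↦ hf.eq_zero_or_eq_one (hA0 hu), fun hu hv hx huv hux hvx ↦
    hf.add_add_eq_one (hA0 hu) (hA0 hv) (hA0 hx) (by rwa [hA]) (by rwa [hA]) (by rwa [hA])⟩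

lemma add_le_one {u v : Fin 3 → ℝ} (hu : u ≠ 0) (hv : v ≠ 0) (huv : u ⬝ᵥ v = 0) :
    f u + f v ≤ 1 := by
  have huv' : u ⨯₃ v ≠ 0 := by
    intro h
    have := cross_dot_cross u v u v
    rw [h, zero_dotProduct, huv, zero_mul, sub_zero, eq_comm, mul_eq_zero] at this
    exact this.elim (fun h ↦ hu (dotProduct_self_eq_zero.mp h))
      fun h ↦ hv (dotProduct_self_eq_zero.mp h)
  have := hf.add_add_eq_one hu hv huv' huv (dot_self_cross u v) (dot_cross_self u v)
  rcases hf.eq_zero_or_eq_one huv' with h | h <;> linarith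

lemma eq_zero_of_eq_one {u v : Fin 3 → ℝ} (hu : u ≠ 0) (hv : v ≠ 0) (huv : u ⬝ᵥ v = 0)
    (hfu : f u = 1) : f v = 0 := by
  have := hf.add_le_one hu hv huv
  rcases hf.eq_zero_or_eq_one hv with h | h <;> linarith

lemma eq_one_of_eq_zero_of_eq_zero {u v x : Fin 3 → ℝ} (hu : u ≠ 0) (hv : v ≠ 0) (hx : x ≠ 0)
    (huv : u ⬝ᵥ v = 0) (hux : u ⬝ᵥ x = 0) (hvx : v ⬝ᵥ x = 0) (hfu : f u = 0) (hfv : f v = 0) :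
    f x = 1 := by
  have := hf.add_add_eq_one hu hv hx huv hux hvx
  linarith

theorem apply_eq_one_of_eight_mul_sq_le {c s : ℝ} (hs : s ≠ 0) (hsc : 8 * s ^ 2 ≤ c ^ 2)
    (h : f ![1, 0, 0] = 1) : f ![c, s, 0] = 1 := by
  obtain ⟨a, b, hb, hab, hsab⟩ := exists_sq_add_sq_eq_one_and_sq_eq hsc
  have hf2 : f ![0, 0, 1] = 0 :=
    hf.eq_zero_of_eq_one (by simp) (by simp) (by rw [vec3_dotProduct']; ring) h
  by_contra hq
  have hfq : f ![c, s, 0] = 0 := (hf.eq_zero_or_eq_one (by simp [hs])).resolve_right hq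
  have hfq' : f ![-s, c, 0] = 1 := hf.eq_one_of_eq_zero_of_eq_zero (by simp [hs]) (by simp)
    (by simp [hs]) (by rw [vec3_dotProduct']; ring) (by rw [vec3_dotProduct']; ring)
    (by rw [vec3_dotProduct']; ring) hfq hf2
  -- Triads through `![1, 0, 0]` and `![-s, c, 0]` force the value `1` at the two vectors
  -- `![-s, a ^ 2 * c, ∓ b * a * c]`, which are orthogonal by the choice of `a` and `b`.
  have hu₁ : f ![0, b, a] = 0 :=
    hf.eq_zero_of_eq_one (by simp) (by simp [hb]) (by rw [vec3_dotProduct']; ring) h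
  have hu₂ : f ![0, b, -a] = 0 :=
    hf.eq_zero_of_eq_one (by simp) (by simp [hb]) (by rw [vec3_dotProduct']; ring) h
  have hv₁ : f ![a * c, a * s, -(b * s)] = 0 :=
    hf.eq_zero_of_eq_one (by simp [hs]) (by simp [hs, hb]) (by rw [vec3_dotProduct']; ring) hfq'
  have hv₂ : f ![-(a * c), -(a * s), -(b * s)] = 0 :=
    hf.eq_zero_of_eq_one (by simp [hs]) (by simp [hs, hb]) (by rw [vec3_dotProduct']; ring) hfq'
  have hr₁ : f ![-s, a ^ 2 * c, -(b * a * c)] = 1 :=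
    hf.eq_one_of_eq_zero_of_eq_zero (by simp [hb]) (by simp [hs, hb]) (by simp [hs])
      (by rw [vec3_dotProduct']; ring) (by rw [vec3_dotProduct']; ring)
      (by rw [vec3_dotProduct']; linear_combination (a * c * s) * hab) hu₁ hv₁
  have hr₂ : f ![-s, a ^ 2 * c, b * a * c] = 1 :=
    hf.eq_one_of_eq_zero_of_eq_zero (by simp [hb]) (by simp [hs, hb]) (by simp [hs])
      (by rw [vec3_dotProduct']; ring) (by rw [vec3_dotProduct']; ring)
      (by rw [vec3_dotProduct']; linear_combination (-(a * c * s)) * hab) hu₂ hv₂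
  have := hf.add_le_one (u := ![-s, a ^ 2 * c, -(b * a * c)]) (v := ![-s, a ^ 2 * c, b * a * c])
    (by simp [hs]) (by simp [hs])
    (by rw [vec3_dotProduct']; linear_combination hsab)
  linarith

lemma apply_cos_sin_eq_one (h : f ![1, 0, 0] = 1) (k : ℕ) :
    f ![cos (k * (π / 12)), sin (k * (π / 12)), 0] = 1 := by
  induction k with
  | zero => simpa using h
  | succ k ih =>
    have := (hf.comp (rotXY_dotProduct_rotXY (k * (π / 12)))).apply_eq_one_of_eight_mul_sq_le
      (sin_pos_of_pos_of_lt_pi (by positivity) (by linarith [pi_pos])).ne'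
      eight_mul_sin_sq_le_cos_sq (by simpa [rotXY] using ih)
    simpa [rotXY, add_mul, cos_add, sin_add] using this

theorem apply_one_zero_zero_ne_one : f ![1, 0, 0] ≠ 1 := by
  intro h
  have h₆ := hf.apply_cos_sin_eq_one h 6
  rw [show ((6 : ℕ) : ℝ) * (π / 12) = π / 2 by push_cast; ring, cos_pi_div_two,
    sin_pi_div_two] at h₆
  have := hf.eq_zero_of_eq_one (v := ![0, 1, 0]) (by simp) (by simp)
    (by rw [vec3_dotProduct']; ring) h
  linarith

end IsTriadColoring

theorem not_isTriadColoring (f : (Fin 3 → ℝ) → ℝ) : ¬ IsTriadColoring f := by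
  intro hf
  have hsum := hf.add_add_eq_one (u := ![1, 0, 0]) (v := ![0, 1, 0]) (x := ![0, 0, 1])
    (by simp) (by simp) (by simp) (by rw [vec3_dotProduct']; ring)
    (by rw [vec3_dotProduct']; ring) (by rw [vec3_dotProduct']; ring)
  have hswap₀₁ : IsTriadColoring (f ∘ fun v ↦ ![v 1, v 0, v 2]) :=
    hf.comp fun u v ↦ by rw [vec3_dotProduct', vec3_dotProduct]; ring
  have hswap₀₂ : IsTriadColoring (f ∘ fun v ↦ ![v 2, v 1, v 0]) :=
    hf.comp fun u v ↦ by rw [vec3_dotProduct', vec3_dotProduct]; ring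
  have h₀ := hf.apply_one_zero_zero_ne_one
  have h₁ := hswap₀₁.apply_one_zero_zero_ne_one
  have h₂ := hswap₀₂.apply_one_zero_zero_ne_one
  simp only [Function.comp_apply] at h₁ h₂
  rcases hf.eq_zero_or_eq_one (u := ![1, 0, 0]) (by simp) with h | h <;>
  rcases hf.eq_zero_or_eq_one (u := ![0, 1, 0]) (by simp) with h' | h' <;>
  simp_all

section Reduction

variable {𝕜 E : Type*} [RCLike 𝕜] [NormedAddCommGroup E] [InnerProductSpace 𝕜 E] {m : ℕ}
  {w : E → ℝ}
    (hsum : ∀ b : OrthonormalBasis (Fin (3 + m)) 𝕜 E, ∑ i, w (b i) = 1)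
include hsum

lemma exists_orthonormalBasis_forall_natAdd_eq_zero
    (h01 : ∀ x : E, ‖x‖ = 1 → w x = 0 ∨ w x = 1)
    (b₀ : OrthonormalBasis (Fin (3 + m)) 𝕜 E) :
    ∃ b : OrthonormalBasis (Fin (3 + m)) 𝕜 E, ∀ k : Fin m, w (b (Fin.natAdd 3 k)) = 0 := by
  obtain ⟨j, hj⟩ := exists_forall_ne_eq_zero_of_sum_eq_one
    (fun i ↦ h01 _ (b₀.orthonormal.1 i)) (hsum b₀)
  refine ⟨b₀.reindex (Equiv.swap j 0), fun k ↦ ?_⟩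
  rw [OrthonormalBasis.reindex_apply]
  refine hj _ ?_
  rw [Equiv.symm_swap, Ne, Equiv.swap_apply_eq_iff, Equiv.swap_apply_left]
  exact Fin.ext_iff.not.mpr (by simp)

lemma sum_eq_one_of_orthonormal {b : OrthonormalBasis (Fin (3 + m)) 𝕜 E}
    (hb : ∀ k : Fin m, w (b (Fin.natAdd 3 k)) = 0) {t : Fin 3 → E} (ht : Orthonormal 𝕜 t)
    (htb : ∀ i k, ⟪t i, b (Fin.natAdd 3 k)⟫_𝕜 = 0) : ∑ i, w (t i) = 1 := by
  have hF := orthonormal_append ht (b.orthonormal.comp _ (Fin.natAdd_injective m 3)) htb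
  have : FiniteDimensional 𝕜 E := b.toBasis.finiteDimensional_of_finite
  have hspan := hF.linearIndependent.span_eq_top_of_card_eq_finrank'
    (by simp [Module.finrank_eq_card_basis b.toBasis])
  simpa [Fin.sum_univ_add, hb] using hsum (OrthonormalBasis.mk hF hspan.ge)

theorem exists_isTriadColoring (h01 : ∀ x : E, ‖x‖ = 1 → w x = 0 ∨ w x = 1)
    (b₀ : OrthonormalBasis (Fin (3 + m)) 𝕜 E) : ∃ f, IsTriadColoring f := by
  obtain ⟨b, hb⟩ := exists_orthonormalBasis_forall_natAdd_eq_zero hsum h01 b₀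
  have he : Orthonormal 𝕜 fun i ↦ b (Fin.castAdd m i) :=
    b.orthonormal.comp _ (Fin.castAdd_injective 3 m)
  set y : (Fin 3 → ℝ) → E := fun u ↦ ∑ i, (u i : 𝕜) • b (Fin.castAdd m i)
  have hy : ∀ u v, ⟪y u, y v⟫_𝕜 = ((u ⬝ᵥ v : ℝ) : 𝕜) := inner_sum_ofReal_smul he
  have hy0 : ∀ {u}, u ≠ 0 → y u ≠ 0 := fun {u} hu h0 ↦
    hu (dotProduct_self_eq_zero.mp (by simpa [h0] using (hy u u).symm))
  have hyb : ∀ u k, ⟪y u, b (Fin.natAdd 3 k)⟫_𝕜 = 0 := fun u k ↦ by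
    simp only [y, sum_inner, inner_smul_left]
    refine Finset.sum_eq_zero fun i _ ↦ ?_
    rw [b.orthonormal.inner_eq_zero (by simp [Fin.ext_iff]; omega), mul_zero]
  refine ⟨fun u ↦ w ((‖y u‖⁻¹ : 𝕜) • y u),
    fun hu ↦ h01 _ (norm_smul_inv_norm (hy0 hu)), fun {u v x} hu hv hx huv hux hvx ↦ ?_⟩
  have ht : Pairwise fun i j ↦ ⟪y (![u, v, x] i), y (![u, v, x] j)⟫_𝕜 = 0 := by
    intro i j hij
    rw [hy]
    fin_cases i <;> fin_cases j <;> simp_all [dotProduct_comm]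
  simpa [Fin.sum_univ_three] using sum_eq_one_of_orthonormal hsum hb
    (orthonormal_inv_norm_smul (fun i ↦ by fin_cases i <;> simp [hy0, hu, hv, hx]) ht)
    fun i k ↦ by simp [inner_smul_left, hyb]

end Reduction

end KochenSpecker

/-- Kochen–Specker theorem for `ℂⁿ`, `n ≥ 3`: there is no `{0,1}`-valued
function on unit vectors whose values sum to 1 over every orthonormal basis. -/
theorem kochen_specker_complex (n : ℕ) (hn : 3 ≤ n) :
    ¬ ∃ w : EuclideanSpace ℂ (Fin n) → ℝ,
      (∀ x : EuclideanSpace ℂ (Fin n), ‖x‖ = 1 → w x = 0 ∨ w x = 1) ∧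
      (∀ b : OrthonormalBasis (Fin n) ℂ (EuclideanSpace ℂ (Fin n)),
        ∑ i, w (b i) = 1) := by
  obtain ⟨m, rfl⟩ := Nat.exists_eq_add_of_le hn
  rintro ⟨w, h01, hsum⟩
  obtain ⟨f, hf⟩ := KochenSpecker.exists_isTriadColoring hsum h01 (EuclideanSpace.basisFun _ ℂ)
  exact KochenSpecker.not_isTriadColoring f hf
end

section
/- No-cloning theorem: there is no unitary operator U on H ⊗ H and fixed unit vector e ∈ H such that U(ψ ⊗ e) = ψ ⊗ ψ for all unit vectors ψ ∈ H, whenever dim(H) ≥ 2. -/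
/-- The tensor product `ψ ⊗ φ` of two vectors of `ℂⁿ`, realized concretely in
`ℂ^(n×n)` with components `(ψ ⊗ φ)(i,j) = ψ i * φ j`. -/
noncomputable def tensorVec {n : ℕ} (ψ φ : EuclideanSpace ℂ (Fin n)) :
    EuclideanSpace ℂ (Fin n × Fin n) :=
  (WithLp.equiv 2 (Fin n × Fin n → ℂ)).symm (fun p => ψ p.1 * φ p.2)

/-!
A unitary preserves inner products, and `⟪ψ ⊗ e, φ ⊗ e⟫ = ⟪ψ, φ⟫` while
`⟪ψ ⊗ ψ, φ ⊗ φ⟫ = ⟪ψ, φ⟫²`. So any two cloned unit vectors have `⟪ψ, φ⟫ ∈ {0, 1}`, whereas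
as soon as `dim H ≥ 2` there are unit vectors with `⟪ψ, φ⟫ = 3/5`.
-/

open scoped InnerProductSpace

lemma inner_tensorVec {n : ℕ} (a b c d : EuclideanSpace ℂ (Fin n)) :
    ⟪tensorVec a c, tensorVec b d⟫_ℂ = ⟪a, b⟫_ℂ * ⟪c, d⟫_ℂ := by
  simp only [tensorVec, PiLp.inner_apply, WithLp.equiv_symm_apply,
    RCLike.inner_apply, map_mul]
  rw [Finset.sum_mul_sum, Fintype.sum_prod_type]
  exact Finset.sum_congr rfl fun i _ => Finset.sum_congr rfl fun j _ => by ring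

theorem inner_eq_zero_or_one_of_cloned {n : ℕ}
    (U : EuclideanSpace ℂ (Fin n × Fin n) →ₗᵢ[ℂ] EuclideanSpace ℂ (Fin n × Fin n))
    {e ψ φ : EuclideanSpace ℂ (Fin n)} (he : ‖e‖ = 1)
    (hψ : U (tensorVec ψ e) = tensorVec ψ ψ) (hφ : U (tensorVec φ e) = tensorVec φ φ) :
    ⟪ψ, φ⟫_ℂ = 0 ∨ ⟪ψ, φ⟫_ℂ = 1 := by
  have h := U.inner_map_map (tensorVec ψ e) (tensorVec φ e)
  rw [hψ, hφ, inner_tensorVec, inner_tensorVec, inner_self_eq_norm_sq_to_K, he,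
    RCLike.ofReal_one, one_pow] at h
  exact (mul_eq_mul_left_iff.mp h).symm

lemma exists_norm_eq_one_inner_eq_three_fifths (ι : Type*) [Fintype ι] [Nontrivial ι] :
    ∃ ψ φ : EuclideanSpace ℂ ι, ‖ψ‖ = 1 ∧ ‖φ‖ = 1 ∧ ⟪ψ, φ⟫_ℂ = 3 / 5 := by
  classical
  obtain ⟨i, j, hij⟩ := exists_pair_ne ι
  obtain ⟨ψ, χ, hψ, hχ, hψχ⟩ : ∃ ψ χ : EuclideanSpace ℂ ι, ‖ψ‖ = 1 ∧ ‖χ‖ = 1 ∧ ⟪ψ, χ⟫_ℂ = 0 :=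
    ⟨EuclideanSpace.single i 1, EuclideanSpace.single j 1, by simp, by simp,
      by simp [EuclideanSpace.inner_single_left, hij.symm]⟩
  have hsq := norm_add_sq_eq_norm_sq_add_norm_sq_of_inner_eq_zero ((3 / 5 : ℂ) • ψ)
    ((4 / 5 : ℂ) • χ) (by rw [inner_smul_left, inner_smul_right, hψχ, mul_zero, mul_zero])
  refine ⟨ψ, (3 / 5 : ℂ) • ψ + (4 / 5 : ℂ) • χ, hψ, ?_, ?_⟩
  · rw [norm_smul, norm_smul, hψ, hχ] at hsq
    exact (mul_self_inj (norm_nonneg _) zero_le_one).mp (by norm_num [hsq])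
  · rw [inner_add_right, inner_smul_right, inner_smul_right, hψχ, inner_self_eq_norm_sq_to_K, hψ]
    norm_num

/-- No-cloning theorem: for `dim H ≥ 2` there is no unitary `U` on `H ⊗ H` and
fixed unit vector `e` with `U (ψ ⊗ e) = ψ ⊗ ψ` for all unit vectors `ψ`. -/
theorem no_cloning (n : ℕ) (hn : 2 ≤ n) :
    ¬ ∃ (U : EuclideanSpace ℂ (Fin n × Fin n) ≃ₗᵢ[ℂ] EuclideanSpace ℂ (Fin n × Fin n))
        (e : EuclideanSpace ℂ (Fin n)), ‖e‖ = 1 ∧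
      ∀ ψ : EuclideanSpace ℂ (Fin n), ‖ψ‖ = 1 →
        U (tensorVec ψ e) = tensorVec ψ ψ := by
  rintro ⟨U, e, he, hU⟩
  have : Nontrivial (Fin n) := Fin.nontrivial_iff_two_le.mpr hn
  obtain ⟨ψ, φ, hψ, hφ, hψφ⟩ := exists_norm_eq_one_inner_eq_three_fifths (Fin n)
  have h := inner_eq_zero_or_one_of_cloned U.toLinearIsometry he (hU ψ hψ) (hU φ hφ)
  norm_num [hψφ] at h
end

section
/- If a unitary U clones two unit vectors ψ and φ (i.e., U(ψ ⊗ e) = ψ ⊗ ψ and U(φ ⊗ e) = φ ⊗ φ), then ⟨ψ, φ⟩ = ⟨ψ, φ⟩², hence ⟨ψ, φ⟩ ∈ {0, 1}; so only mutually orthogonal or identical states can be cloned by the same unitary. -/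
theorem inner_tensorVec_tensorVec {n : ℕ} (a b c d : EuclideanSpace ℂ (Fin n)) :
    inner ℂ (tensorVec a b) (tensorVec c d) = inner ℂ a c * inner ℂ b d := by
  simp only [tensorVec, PiLp.inner_apply, Fintype.sum_prod_type, Finset.sum_mul_sum,
    WithLp.equiv_symm_apply, RCLike.inner_apply, map_mul]
  exact Finset.sum_congr rfl fun _ _ => Finset.sum_congr rfl fun _ _ => by ring

theorem inner_eq_sq_of_clones {n : ℕ}
    (U : EuclideanSpace ℂ (Fin n × Fin n) →ₗᵢ[ℂ] EuclideanSpace ℂ (Fin n × Fin n))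
    {e : EuclideanSpace ℂ (Fin n)} (he : ‖e‖ = 1) {ψ φ : EuclideanSpace ℂ (Fin n)}
    (hcψ : U (tensorVec ψ e) = tensorVec ψ ψ) (hcφ : U (tensorVec φ e) = tensorVec φ φ) :
    inner ℂ ψ φ = inner ℂ ψ φ ^ 2 := by
  have hee : inner ℂ e e = (1 : ℂ) := by simp [he]
  calc inner ℂ ψ φ = inner ℂ (tensorVec ψ e) (tensorVec φ e) := by
        rw [inner_tensorVec_tensorVec, hee, mul_one]
    _ = inner ℂ (U (tensorVec ψ e)) (U (tensorVec φ e)) := (U.inner_map_map _ _).symm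
    _ = inner ℂ ψ φ ^ 2 := by rw [hcψ, hcφ, inner_tensorVec_tensorVec, sq]

theorem cloned_states_orthogonal_or_equal_general {n : ℕ}
    (U : EuclideanSpace ℂ (Fin n × Fin n) ≃ₗᵢ[ℂ] EuclideanSpace ℂ (Fin n × Fin n))
    (e : EuclideanSpace ℂ (Fin n)) (he : ‖e‖ = 1)
    (ψ φ : EuclideanSpace ℂ (Fin n))
    (hcψ : U (tensorVec ψ e) = tensorVec ψ ψ)
    (hcφ : U (tensorVec φ e) = tensorVec φ φ) :
    (inner ℂ ψ φ : ℂ) = (inner ℂ ψ φ : ℂ) ^ 2 ∧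
      ((inner ℂ ψ φ : ℂ) = 0 ∨ (inner ℂ ψ φ : ℂ) = 1) := by
  have h := inner_eq_sq_of_clones U.toLinearIsometry he hcψ hcφ
  exact ⟨h, IsIdempotentElem.iff_eq_zero_or_one.mp (by rw [IsIdempotentElem, ← sq, ← h])⟩

/-- If a single unitary clones two unit vectors `ψ` and `φ`, then
`⟨ψ,φ⟩ = ⟨ψ,φ⟩²`, hence `⟨ψ,φ⟩ ∈ {0,1}`: only orthogonal or identical states
can be cloned by the same unitary. -/
theorem cloned_states_orthogonal_or_equal {n : ℕ}
    (U : EuclideanSpace ℂ (Fin n × Fin n) ≃ₗᵢ[ℂ] EuclideanSpace ℂ (Fin n × Fin n))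
    (e : EuclideanSpace ℂ (Fin n)) (he : ‖e‖ = 1)
    (ψ φ : EuclideanSpace ℂ (Fin n)) (hψ : ‖ψ‖ = 1) (hφ : ‖φ‖ = 1)
    (hcψ : U (tensorVec ψ e) = tensorVec ψ ψ)
    (hcφ : U (tensorVec φ e) = tensorVec φ φ) :
    (inner ℂ ψ φ : ℂ) = (inner ℂ ψ φ : ℂ) ^ 2 ∧
      ((inner ℂ ψ φ : ℂ) = 0 ∨ (inner ℂ ψ φ : ℂ) = 1) :=
  cloned_states_orthogonal_or_equal_general U e he ψ φ hcψ hcφ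
end

section
/- Von Neumann-style no-go for additive dispersion-free states: there is no function v from all self-adjoint n×n complex matrices (n ≥ 2) to ℝ such that v(A + B) = v(A) + v(B) for all self-adjoint A, B (including non-commuting ones) and v(A) ∈ spectrum(A) for all A. -/
/-! If `e`, `p` are idempotents with `e p e = c e` and `p e p = c p`, then
`(e + p) ((e + p - 1) ^ 2 - c) = 0`, so the spectrum of `e + p` lies in `{0, 1 ± √c}`.
A value assignment `v` sends self-adjoint idempotents to `0` or `1`, so by additivity
`v e + v p ∈ {0, 1, 2}` lies in that spectrum; for `c = 1/2` this forces `v e = 0`. Taking for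
`e` a diagonal matrix unit `E i` and for `p` the projection onto the line through `e_i + e_j`
gives `v (E i) = 0` for every `i`, whereas `∑ i, E i = 1` and `v 1 = 1`. -/

open Polynomial Matrix

theorem spectrum.eval_eq_zero_of_aeval_eq_zero {𝕜 A : Type*} [Field 𝕜] [Ring A] [Algebra 𝕜 A]
    {a : A} {p : 𝕜[X]} (hp : aeval a p = 0) {μ : 𝕜} (hμ : μ ∈ spectrum 𝕜 a) :
    p.eval μ = 0 := by
  cases subsingleton_or_nontrivial A
  · simp [spectrum.of_subsingleton] at hμ
  simpa [hp, spectrum.zero_eq] using spectrum.subset_polynomial_aeval a p ⟨μ, hμ, rfl⟩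

section TwoIdempotents

variable {R A : Type*} [CommRing R] [Ring A] [Algebra R A] {e p : A}

theorem IsIdempotentElem.add_pow_three_sub {c : R} (he : IsIdempotentElem e)
    (hp : IsIdempotentElem p) (hepe : e * p * e = c • e) (hpep : p * e * p = c • p) :
    (e + p) ^ 3 - 2 * (e + p) ^ 2 + (1 - c) • (e + p) = 0 := by
  have hepp : e * p * p = e * p := by rw [mul_assoc, hp.eq]
  have hpee : p * e * e = p * e := by rw [mul_assoc, he.eq]
  have hsq : (e + p) ^ 2 = e + p + e * p + p * e := by
    rw [sq, add_mul, mul_add, mul_add, he.eq, hp.eq]; abel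
  rw [pow_succ, hsq]
  simp only [add_mul, mul_add, he.eq, hp.eq, hepp, hpee, hepe, hpep, two_mul, sub_smul, one_smul,
    smul_add]
  abel

theorem IsIdempotentElem.mem_spectrum_add {𝕜 : Type*} [Field 𝕜] [Algebra 𝕜 A] {c : 𝕜}
    (he : IsIdempotentElem e) (hp : IsIdempotentElem p)
    (hepe : e * p * e = c • e) (hpep : p * e * p = c • p) {μ : 𝕜} (hμ : μ ∈ spectrum 𝕜 (e + p)) :
    μ = 0 ∨ (μ - 1) ^ 2 = c := by
  have hroot := spectrum.eval_eq_zero_of_aeval_eq_zero (p := X ^ 3 - 2 * X ^ 2 + C (1 - c) * X)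
    (by simpa [Algebra.smul_def, map_ofNat] using he.add_pow_three_sub hp hepe hpep) hμ
  have hfactor : μ * ((μ - 1) ^ 2 - c) = 0 := by
    simp only [eval_add, eval_sub, eval_mul, eval_pow, eval_X, eval_C, eval_ofNat] at hroot
    linear_combination hroot
  simpa [sub_eq_zero] using hfactor

end TwoIdempotents

namespace Matrix

variable {ι K : Type*} [DecidableEq ι] [Field K]

/-- The orthogonal projection onto the line spanned by `Pi.single i 1 + Pi.single j 1`
(for `i ≠ j`). -/
def pairProj (i j : ι) : Matrix ι ι K :=
  (2 : K)⁻¹ • (single i i 1 + single i j 1 + single j i 1 + single j j 1)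

theorem isHermitian_single_one [StarRing K] (i : ι) : (single i i (1 : K)).IsHermitian := by
  simp [IsHermitian]

theorem isHermitian_pairProj [StarRing K] (i j : ι) :
    (pairProj i j : Matrix ι ι K).IsHermitian := by
  simp only [IsHermitian, pairProj, conjTranspose_smul, conjTranspose_add, conjTranspose_single,
    star_one, star_inv₀, star_ofNat]
  congr 1; abel

variable [Fintype ι] {i j : ι}

theorem single_mul_pairProj_mul_single (hij : i ≠ j) :
    single i i (1 : K) * pairProj i j * single i i 1 = (2 : K)⁻¹ • single i i 1 := by
  simp only [pairProj, Matrix.smul_mul, Matrix.mul_smul, add_mul, mul_add,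
    single_mul_single_same, single_mul_single_of_ne, ne_eq, hij, Ne.symm hij,
    not_false_eq_true, one_mul, add_zero]

variable [NeZero (2 : K)]

theorem isIdempotentElem_pairProj (hij : i ≠ j) :
    IsIdempotentElem (pairProj i j : Matrix ι ι K) := by
  simp only [IsIdempotentElem, pairProj, Matrix.smul_mul, Matrix.mul_smul, add_mul, mul_add,
    smul_smul, single_mul_single_same, single_mul_single_of_ne, ne_eq, hij, Ne.symm hij,
    not_false_eq_true, one_mul, smul_add, add_zero, zero_add, smul_zero]
  match_scalars <;> field_simp <;> norm_num

theorem pairProj_mul_single_mul_pairProj (hij : i ≠ j) :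
    pairProj i j * single i i (1 : K) * pairProj i j = (2 : K)⁻¹ • pairProj i j := by
  simp only [pairProj, Matrix.smul_mul, Matrix.mul_smul, add_mul, mul_add, smul_smul,
    single_mul_single_same, single_mul_single_of_ne, ne_eq, hij, Ne.symm hij, not_false_eq_true,
    one_mul, smul_add, add_zero, smul_zero]
  match_scalars <;> field_simp

end Matrix

namespace DispersionFree

section

variable {A : Type*} {v : A → ℝ}

theorem map_sum [AddCommMonoid A] [StarAddMonoid A]
    (hadd : ∀ a b : A, IsSelfAdjoint a → IsSelfAdjoint b → v (a + b) = v a + v b)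
    {κ : Type*} (s : Finset κ) {f : κ → A} (hf : ∀ k, IsSelfAdjoint (f k)) :
    v (∑ k ∈ s, f k) = ∑ k ∈ s, v (f k) := by
  induction s using Finset.cons_induction with
  | empty => simpa using hadd 0 0 (.zero A) (.zero A)
  | cons k s hk ih =>
    rw [Finset.sum_cons, Finset.sum_cons, hadd _ _ (hf k) (isSelfAdjoint_sum s fun k _ ↦ hf k), ih]

variable [Ring A] [StarRing A] [Algebra ℂ A]

theorem apply_one [Nontrivial A]
    (hspec : ∀ a : A, IsSelfAdjoint a → (v a : ℂ) ∈ spectrum ℂ a) : v 1 = 1 := by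
  simpa [spectrum.one_eq] using hspec 1 (.one A)

theorem eq_zero_or_one_of_isIdempotentElem
    (hspec : ∀ a : A, IsSelfAdjoint a → (v a : ℂ) ∈ spectrum ℂ a)
    {a : A} (ha : IsSelfAdjoint a) (ha' : IsIdempotentElem a) : v a = 0 ∨ v a = 1 := by
  simpa using ha'.spectrum_subset ℂ (hspec a ha)

theorem eq_zero_of_isIdempotentElem
    (hadd : ∀ a b : A, IsSelfAdjoint a → IsSelfAdjoint b → v (a + b) = v a + v b)
    (hspec : ∀ a : A, IsSelfAdjoint a → (v a : ℂ) ∈ spectrum ℂ a)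
    {e p : A} (he : IsSelfAdjoint e) (hp : IsSelfAdjoint p)
    (he' : IsIdempotentElem e) (hp' : IsIdempotentElem p) {c : ℂ} (hc₀ : c ≠ 0) (hc₁ : c ≠ 1)
    (hepe : e * p * e = c • e) (hpep : p * e * p = c • p) : v e = 0 := by
  have hsum := he'.mem_spectrum_add hp' hepe hpep (hspec _ (he.add hp))
  rw [hadd e p he hp] at hsum
  rcases eq_zero_or_one_of_isIdempotentElem hspec he he' with hve | hve
  · exact hve
  rcases eq_zero_or_one_of_isIdempotentElem hspec hp hp' with hvp | hvp <;>
    norm_num [hve, hvp, hc₀.symm, hc₁.symm] at hsum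

end

theorem apply_single_one_eq_zero {ι : Type*} [Fintype ι] [DecidableEq ι] [Nontrivial ι]
    {v : Matrix ι ι ℂ → ℝ}
    (hadd : ∀ a b : Matrix ι ι ℂ, IsSelfAdjoint a → IsSelfAdjoint b → v (a + b) = v a + v b)
    (hspec : ∀ a : Matrix ι ι ℂ, IsSelfAdjoint a → (v a : ℂ) ∈ spectrum ℂ a) (i : ι) :
    v (single i i 1) = 0 := by
  obtain ⟨j, hji⟩ := exists_ne i
  exact eq_zero_of_isIdempotentElem hadd hspec (isHermitian_single_one i) (isHermitian_pairProj i j)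
    (by simp [IsIdempotentElem]) (isIdempotentElem_pairProj hji.symm) (by norm_num) (by norm_num)
    (single_mul_pairProj_mul_single hji.symm) (pairProj_mul_single_mul_pairProj hji.symm)

end DispersionFree

/-- Von Neumann-style no-go theorem: for `n ≥ 2` there is no real-valued
function on the self-adjoint `n × n` complex matrices that is additive on all
pairs (including non-commuting ones) and assigns to each matrix an element of
its spectrum. -/
theorem no_additive_dispersion_free_state (n : ℕ) (hn : 2 ≤ n) :
    ¬ ∃ v : Matrix (Fin n) (Fin n) ℂ → ℝ,
      (∀ A B : Matrix (Fin n) (Fin n) ℂ, A.IsHermitian → B.IsHermitian →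
        v (A + B) = v A + v B) ∧
      (∀ A : Matrix (Fin n) (Fin n) ℂ, A.IsHermitian →
        (v A : ℂ) ∈ spectrum ℂ A) := by
  rintro ⟨v, hadd, hspec⟩
  have : Nontrivial (Fin n) := Fin.nontrivial_iff_two_le.2 hn
  have hsum := DispersionFree.map_sum hadd Finset.univ fun i ↦ isHermitian_single_one (K := ℂ) i
  rw [sum_single_one, DispersionFree.apply_one hspec] at hsum
  simp [DispersionFree.apply_single_one_eq_zero hadd hspec] at hsum
end
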